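/- Let G be a finite simple graph, let I_c be a critical independent set of G, and let I_1^M, …, I_n^M be maximum independent sets of G. For each i, set A_i = I_c \ I_i^M and B_i = N(I_c) ∩ I_i^M. Then there exists a matching of G matching every vertex of ⋃_{i=1}^n A_i to a vertex of ⋃_{i=1}^n B_i. -/

import Mathlib

variable {V : Type*} [Fintype V] [DecidableEq V]

/-- `S` is an independent set of `G`. -/
def IsIndep (G : SimpleGraph V) (S : Set V) : Prop :=
  ∀ ⦃u⦄, u ∈ S → ∀ ⦃v⦄, v ∈ S → ¬ G.Adj u v

/-- The independence number `α(G)`: the maximum cardinality of an independent set. -/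
noncomputable def indepNum (G : SimpleGraph V) : ℕ :=
  sSup {n : ℕ | ∃ S : Set V, IsIndep G S ∧ S.ncard = n}

/-- `S` is a maximum independent set of `G`. -/
def IsMaxIndep (G : SimpleGraph V) (S : Set V) : Prop :=
  IsIndep G S ∧ ∀ T : Set V, IsIndep G T → T.ncard ≤ S.ncard

/-- The neighborhood `N(X)` of a set of vertices `X`. -/
def nbhdSet (G : SimpleGraph V) (X : Set V) : Set V :=
  {v | ∃ u ∈ X, G.Adj u v}

/-- The difference `d_G(X) = |X| - |N(X)|` of a vertex set `X`. -/
noncomputable def diffSet (G : SimpleGraph V) (X : Set V) : ℤ :=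
  (X.ncard : ℤ) - ((nbhdSet G X).ncard : ℤ)

/-- `I` is a critical independent set of `G`. -/
def IsCriticalIndep (G : SimpleGraph V) (I : Set V) : Prop :=
  IsIndep G I ∧ ∀ J : Set V, IsIndep G J → diffSet G J ≤ diffSet G I

/-- `I` is a maximum-cardinality critical independent set of `G`. -/
def IsMaxCriticalIndep (G : SimpleGraph V) (I : Set V) : Prop :=
  IsCriticalIndep G I ∧ ∀ J : Set V, IsCriticalIndep G J → J.ncard ≤ I.ncard

/-- `core(G)`: the intersection of all maximum independent sets of `G`. -/
def coreSet (G : SimpleGraph V) : Set V := ⋂₀ {S : Set V | IsMaxIndep G S}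

/-- `corona(G)`: the union of all maximum independent sets of `G`. -/
def coronaSet (G : SimpleGraph V) : Set V := ⋃₀ {S : Set V | IsMaxIndep G S}

/-- `ker(G)`: the intersection of all critical independent sets of `G`. -/
def kerSet (G : SimpleGraph V) : Set V := ⋂₀ {S : Set V | IsCriticalIndep G S}

/-- `diadem(G)`: the union of all critical independent sets of `G`. -/
def diademSet (G : SimpleGraph V) : Set V := ⋃₀ {S : Set V | IsCriticalIndep G S}

/-- `nucleus(G)`: the intersection of all maximum-cardinality critical independent
sets of `G`. -/
def nucleusSet (G : SimpleGraph V) : Set V := ⋂₀ {S : Set V | IsMaxCriticalIndep G S}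

/-- `C` is the vertex set of some odd cycle of `G`. -/
def IsOddCycleVertexSet (G : SimpleGraph V) (C : Set V) : Prop :=
  ∃ (v : V) (w : G.Walk v v), w.IsCycle ∧ Odd w.length ∧ {x | x ∈ w.support} = C

/-- The maximum cardinality of a set of pairwise vertex-distinct odd cycles of `G`,
i.e. the number of distinct vertex sets of odd cycles of `G`. -/
noncomputable def numVertexDistinctOddCycles (G : SimpleGraph V) : ℕ :=
  {C : Set V | IsOddCycleVertexSet G C}.ncard

/-- `E` is the edge set of some odd cycle of `G`. -/
def IsOddCycleEdgeSet (G : SimpleGraph V) (E : Set (Sym2 V)) : Prop :=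
  ∃ (v : V) (w : G.Walk v v), w.IsCycle ∧ Odd w.length ∧ {e | e ∈ w.edges} = E

/-- The number of (distinct) odd cycles of `G`, where a cycle is identified with
its edge set. -/
noncomputable def numOddCycles (G : SimpleGraph V) : ℕ :=
  {E : Set (Sym2 V) | IsOddCycleEdgeSet G E}.ncard

/-!
Hall's theorem matches an independent set `S` minus a maximum independent set `I` into `I`: if
some `X ⊆ S \ I` had fewer than `|X|` neighbours in `I`, then `(I \ N(X)) ∪ X` would be a larger
independent set. For several maximum independent sets, `S \ ⋂ Iᵢ` splits into `S \ I₁`, matched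
into `I₁`, and a part of `I₁ \ ⋂_{i>1} Iᵢ`, matched by induction (applied to the independent set
`I₁`) into `N(I₁)`; the two targets are disjoint because `I₁` is independent.
-/

section

omit [Fintype V] [DecidableEq V]

variable {G : SimpleGraph V}

lemma IsIndep.mono {S T : Set V} (hS : IsIndep G S) (hTS : T ⊆ S) : IsIndep G T :=
  fun _ hu _ hv => hS (hTS hu) (hTS hv)

lemma IsIndep.disjoint_nbhdSet {S : Set V} (hS : IsIndep G S) : Disjoint S (nbhdSet G S) :=
  Set.disjoint_left.2 fun _ hv ⟨_, hu, huv⟩ => hS hu hv huv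

lemma IsIndep.ncard_le_ncard_nbhdSet_inter [Finite V] {X I : Set V} (hX : IsIndep G X)
    (hXI : Disjoint X I) (hI : IsMaxIndep G I) : X.ncard ≤ (nbhdSet G X ∩ I).ncard := by
  have hJ : IsIndep G (I \ nbhdSet G X ∪ X) := by
    rintro u (hu | hu) v (hv | hv) huv
    · exact hI.1 hu.1 hv.1 huv
    · exact hu.2 ⟨v, hv, huv.symm⟩
    · exact hv.2 ⟨u, hu, huv⟩
    · exact hX hu hv huv
  have hJcard := Set.ncard_union_eq (hXI.symm.mono_left (Set.sdiff_subset (t := nbhdSet G X)))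
  have hIcard := Set.ncard_inter_add_ncard_sdiff_eq_ncard I (nbhdSet G X)
  rw [Set.inter_comm] at hIcard
  have := hI.2 _ hJ
  omega

def MatchesInto (G : SimpleGraph V) (A T : Set V) : Prop :=
  ∃ f : V → V, Set.InjOn f A ∧ Set.MapsTo f A T ∧ ∀ a ∈ A, G.Adj a (f a)

open Finset in
lemma matchesInto_of_isMaxIndep [Finite V] {A I : Set V} (hA : IsIndep G A)
    (hAI : Disjoint A I) (hI : IsMaxIndep G I) : MatchesInto G A I := by
  classical
  have := Fintype.ofFinite V
  have hall (B : Finset A) : #B ≤ #{v | ∃ a ∈ B, G.Adj a v ∧ v ∈ I} := by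
    have hX := (hA.mono (Subtype.coe_image_subset A B)).ncard_le_ncard_nbhdSet_inter
      (hAI.mono_left (Subtype.coe_image_subset A B)) hI
    rw [Set.ncard_image_of_injective _ Subtype.val_injective, Set.ncard_coe_finset] at hX
    convert hX using 1
    rw [← Set.ncard_coe_finset]
    congr 1
    ext v
    simp [nbhdSet, ← exists_and_right, and_assoc]
  obtain ⟨f, hf, hfI⟩ := (Fintype.all_card_le_filter_rel_iff_exists_injective _).1 hall
  have hext (a : V) (ha : a ∈ A) : Function.extend Subtype.val f id a = f ⟨a, ha⟩ :=
    Subtype.val_injective.extend_apply f id ⟨a, ha⟩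
  refine ⟨Function.extend Subtype.val f id, fun a ha b hb hab => ?_, fun a ha => ?_,
    fun a ha => ?_⟩
  · rw [hext a ha, hext b hb] at hab
    exact congrArg Subtype.val (hf hab)
  · rw [hext a ha]
    exact (hfI ⟨a, ha⟩).2
  · rw [hext a ha]
    exact (hfI ⟨a, ha⟩).1

namespace MatchesInto

variable {A A' T T' : Set V}

lemma mono (h : MatchesInto G A T) (hA : A' ⊆ A) (hT : T ⊆ T') : MatchesInto G A' T' :=
  let ⟨f, hf, hfT, hfG⟩ := h
  ⟨f, hf.mono hA, (hfT.mono_left hA).mono_right hT, fun a ha => hfG a (hA ha)⟩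

lemma inter_nbhdSet {S : Set V} (h : MatchesInto G A T) (hAS : A ⊆ S) :
    MatchesInto G A (nbhdSet G S ∩ T) :=
  let ⟨f, hf, hfT, hfG⟩ := h
  ⟨f, hf, fun a ha => ⟨⟨a, hAS ha, hfG a ha⟩, hfT ha⟩, hfG⟩

lemma union (h : MatchesInto G A T) (h' : MatchesInto G A' T') (hTT' : Disjoint T T') :
    MatchesInto G (A ∪ A') (T ∪ T') := by
  classical
  obtain ⟨f, hf, hfT, hfG⟩ := h
  obtain ⟨f', hf', hfT', hfG'⟩ := h'
  have hg : Set.EqOn (A.piecewise f f') f A := A.piecewise_eqOn f f'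
  have hg' : Set.EqOn (A.piecewise f f') f' (A' \ A) :=
    (A.piecewise_eqOn_compl f f').mono fun _ ha => ha.2
  rw [← Set.union_sdiff_self]
  refine ⟨A.piecewise f f', ?_, ?_, ?_⟩
  · rw [Set.injOn_union Set.disjoint_sdiff_right]
    refine ⟨hf.congr hg.symm, (hf'.mono Set.sdiff_subset).congr hg'.symm, fun a ha b hb => ?_⟩
    rw [hg ha, hg' hb]
    exact hTT'.ne_of_mem (hfT ha) (hfT' hb.1)
  · exact (hfT.congr hg.symm).union_union ((hfT'.mono_left Set.sdiff_subset).congr hg'.symm)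
  · rintro a (ha | ha)
    · rw [hg ha]
      exact hfG a ha
    · rw [hg' ha]
      exact hfG' a ha.1

lemma exists_isMatching (h : MatchesInto G A T) (hA : IsIndep G A) :
    ∃ M : G.Subgraph, M.IsMatching ∧ A ⊆ M.verts ∧ ∀ a ∈ A, ∀ w, M.Adj a w → w ∈ T := by
  obtain ⟨f, hf, hfT, hfG⟩ := h
  have hdisj : Disjoint A (f '' A) :=
    Set.disjoint_left.2 fun a ha ⟨b, hb, hba⟩ => hA hb ha (hba ▸ hfG b hb)
  obtain ⟨M, hMverts, hM⟩ := SimpleGraph.Subgraph.IsMatching.exists_of_disjoint_sets_of_equiv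
    hdisj (hf.bijOn_image.equiv f) fun a => hfG a a.2
  refine ⟨M, hM, hMverts ▸ Set.subset_union_left, fun a ha w haw => ?_⟩
  have hw : w ∈ A ∪ f '' A := hMverts ▸ M.edge_vert haw.symm
  obtain ⟨b, hb, rfl⟩ := hw.resolve_left fun hwA => hA ha hwA (M.adj_sub haw)
  exact hfT hb

end MatchesInto

lemma matchesInto_sdiff_biInter [Finite V] {ι : Type*} {I : ι → Set V} (s : Finset ι)
    (hI : ∀ i ∈ s, IsMaxIndep G (I i)) {S : Set V} (hS : IsIndep G S) :
    MatchesInto G (S \ ⋂ i ∈ s, I i) (⋃ i ∈ s, I i) := by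
  classical
  induction s using Finset.induction_on generalizing S with
  | empty => exact ⟨id, by simp, by simp, by simp⟩
  | insert j s _ ih =>
    rw [Finset.set_biInter_insert, Finset.set_biUnion_insert]
    have hj := hI j (Finset.mem_insert_self j s)
    have hmatch_out := matchesInto_of_isMaxIndep (hS.mono Set.sdiff_subset)
      Set.disjoint_sdiff_left hj
    have hmatch_in := (ih (fun i hi => hI i (Finset.mem_insert_of_mem hi)) hj.1).inter_nbhdSet
      Set.sdiff_subset
    have hdisj := hj.1.disjoint_nbhdSet.mono_right (Set.inter_subset_left (t := ⋃ i ∈ s, I i))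
    refine (hmatch_out.union hmatch_in hdisj).mono ?_
      (Set.union_subset_union_right _ Set.inter_subset_right)
    rintro x ⟨hxS, hx⟩
    by_cases hxj : x ∈ I j
    · exact Or.inr ⟨hxj, fun hxs => hx ⟨hxj, hxs⟩⟩
    · exact Or.inl ⟨hxS, hxj⟩

end

theorem matching_from_union_A_to_union_B_general (G : SimpleGraph V) (Ic : Set V)
    (hIc : IsCriticalIndep G Ic) (n : ℕ) (I : Fin n → Set V)
    (hI : ∀ j, IsMaxIndep G (I j)) :
    ∃ M : G.Subgraph, M.IsMatching ∧ (⋃ i, Ic \ I i) ⊆ M.verts ∧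
      ∀ a ∈ ⋃ i, Ic \ I i, ∀ w : V, M.Adj a w → w ∈ ⋃ i, nbhdSet G Ic ∩ I i := by
  have hA : MatchesInto G (Ic \ ⋂ i, I i) (⋃ i, I i) := by
    simpa using matchesInto_sdiff_biInter Finset.univ (fun i _ => hI i) hIc.1
  rw [← Set.sdiff_iInter, ← Set.inter_iUnion]
  exact (hA.inter_nbhdSet Set.sdiff_subset).exists_isMatching (hIc.1.mono Set.sdiff_subset)

/-- Let `I_c` be a critical independent set of `G` and let
`I_1^M, …, I_n^M` be maximum independent sets of `G`. With `A_i = I_c \ I_i^M` and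
`B_i = N(I_c) ∩ I_i^M`, there is a matching of `G` matching every vertex of
`⋃ i, A_i` to a vertex of `⋃ i, B_i`. -/
theorem matching_from_union_A_to_union_B (G : SimpleGraph V) (Ic : Set V)
    (hIc : IsCriticalIndep G Ic) (n : ℕ) (hn : 1 ≤ n) (I : Fin n → Set V)
    (hI : ∀ j, IsMaxIndep G (I j)) :
    ∃ M : G.Subgraph, M.IsMatching ∧ (⋃ i, Ic \ I i) ⊆ M.verts ∧
      ∀ a ∈ ⋃ i, Ic \ I i, ∀ w : V, M.Adj a w → w ∈ ⋃ i, nbhdSet G Ic ∩ I i :=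
  matching_from_union_A_to_union_B_general G Ic hIc n I hI
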